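/- Suppose the identifiability condition holds: Θ* ∈ ([−M,M]^p)^k satisfies ∫ f_{Θ*} dP ≤ ∫ f_Θ dP for all Θ ∈ (ℝ^p)^k, and for every η > 0 there exists ε > 0 such that every Θ ∈ ([−M,M]^p)^k with diss(Θ, Θ*) > η satisfies ∫ f_Θ dP > ∫ f_{Θ*} dP + ε. Let Θ̂_n : Ω → ([−M,M]^p)^k be measurable maps such that, almost surely, Θ̂_n minimizes Θ ↦ (1/n) Σ_{i=1}^n f_Θ(X_i) over ([−M,M]^p)^k. Then ∫ f_{Θ̂_n} dP → ∫ f_{Θ*} dP almost surely and diss(Θ̂_n, Θ*) → 0 almost surely. -/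

import Mathlib

open MeasureTheory ProbabilityTheory Real Filter
open scoped ENNReal

/-- Bregman divergence generated by a differentiable function `φ`. -/
noncomputable def dphi {p : ℕ} (φ : EuclideanSpace ℝ (Fin p) → ℝ)
    (x y : EuclideanSpace ℝ (Fin p)) : ℝ :=
  φ x - φ y - inner ℝ (gradient φ y) (x - y)

/-- The cube `[-M, M]^p` in `ℝ^p`. -/
def cube (p : ℕ) (M : ℝ) : Set (EuclideanSpace ℝ (Fin p)) := {x | ∀ i, |x i| ≤ M}

/-- The clustering objective `f_Θ(x) = Ψ(d_φ(x,θ₁),…,d_φ(x,θ_k))`. -/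
noncomputable def fTheta {p k : ℕ} (φ : EuclideanSpace ℝ (Fin p) → ℝ)
    (Ψ : (Fin k → ℝ) → ℝ) (Θ : Fin k → EuclideanSpace ℝ (Fin p))
    (x : EuclideanSpace ℝ (Fin p)) : ℝ :=
  Ψ (fun j => dphi φ x (Θ j))

/-- Permutation-invariant dissimilarity between configurations of `k` centroids. -/
noncomputable def diss {p k : ℕ} (Θ Θ' : Fin k → EuclideanSpace ℝ (Fin p)) : ℝ :=
  ⨅ σ : Equiv.Perm (Fin k), Real.sqrt (∑ j, ‖Θ j - Θ' (σ j)‖ ^ 2)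

/-!
The Bregman divergence `d_φ(x, θ)` is Lipschitz in `θ` on the cube, uniformly in `x` there,
because `∇φ` is; hence the losses `f_Θ(x)`, and with them the empirical and the population
risks, are equi-Lipschitz in `Θ` on the compact parameter set `([-M, M]^p)^k`. The strong law
of large numbers on a countable dense set of parameters then upgrades to almost sure uniform
convergence of the empirical risk. The population risk of an empirical risk minimiser
therefore tends to the minimal risk, and the well-separatedness of the minimiser `Θ*` turns
this into `diss(Θ̂ₙ, Θ*) → 0`.
-/

open Set Topology

theorem isCompact_cube (p : ℕ) (M : ℝ) : IsCompact (cube p M) := by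
  have hcube : cube p M =
      (EuclideanSpace.equiv (Fin p) ℝ).toHomeomorph ⁻¹' univ.pi fun _ => Icc (-M) M := by
    ext x
    simp only [cube, mem_preimage, mem_univ_pi, mem_Icc, abs_le]
    rfl
  rw [hcube, Homeomorph.isCompact_preimage]
  exact isCompact_univ_pi fun _ => isCompact_Icc

theorem diss_nonneg {p k : ℕ} (Θ Θ' : Fin k → EuclideanSpace ℝ (Fin p)) : 0 ≤ diss Θ Θ' :=
  Real.iInf_nonneg fun _ => Real.sqrt_nonneg _

theorem ConvexOn.fderiv_sub_le {E : Type*} [NormedAddCommGroup E] [NormedSpace ℝ E]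
    {φ : E → ℝ} (hconv : ConvexOn ℝ univ φ) {y : E} (hφ : DifferentiableAt ℝ φ y) (x : E) :
    fderiv ℝ φ y (x - y) ≤ φ x - φ y := by
  set g : ℝ →ᵃ[ℝ] E := AffineMap.lineMap y x
  have hline : ConvexOn ℝ univ (φ ∘ g) := hconv.comp_affineMap g
  have hderiv : HasDerivAt (φ ∘ g) (fderiv ℝ φ y (x - y)) 0 := by
    have hφ' : HasFDerivAt φ (fderiv ℝ φ y) (g 0) := by
      simpa [g] using hφ.hasFDerivAt
    exact hφ'.comp_hasDerivAt (0 : ℝ) (AffineMap.hasDerivAt_lineMap (𝕜 := ℝ))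
  simpa [g, slope_def_field] using hline.le_slope_of_hasDerivAt trivial trivial one_pos hderiv

section Bregman

variable {p : ℕ} {φ : EuclideanSpace ℝ (Fin p) → ℝ}

theorem dphi_nonneg (hconv : ConvexOn ℝ univ φ) (hφ : Differentiable ℝ φ)
    (x y : EuclideanSpace ℝ (Fin p)) : 0 ≤ dphi φ x y := by
  have := hconv.fderiv_sub_le (hφ y) x
  rw [dphi, inner_gradient_left]
  linarith

theorem dphi_add_dphi (x y : EuclideanSpace ℝ (Fin p)) :
    dphi φ x y + dphi φ y x = inner ℝ (gradient φ x - gradient φ y) (x - y) := by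
  simp only [dphi, inner_sub_left, inner_sub_right]
  ring

theorem dphi_sub_dphi (x θ θ' : EuclideanSpace ℝ (Fin p)) :
    dphi φ x θ - dphi φ x θ' =
      inner ℝ (gradient φ θ' - gradient φ θ) (x - θ) - dphi φ θ θ' := by
  simp only [dphi, inner_sub_left, inner_sub_right]
  ring

theorem continuous_dphi_left (hφ : Continuous φ) (θ : EuclideanSpace ℝ (Fin p)) :
    Continuous fun x => dphi φ x θ := by
  unfold dphi
  fun_prop

variable {s : Set (EuclideanSpace ℝ (Fin p))} {H : ℝ}

theorem dphi_le_mul_norm_sq (hconv : ConvexOn ℝ univ φ) (hφ : Differentiable ℝ φ)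
    (hgrad : ∀ x ∈ s, ∀ y ∈ s, ‖gradient φ x - gradient φ y‖ ≤ H * ‖x - y‖)
    {x y : EuclideanSpace ℝ (Fin p)} (hx : x ∈ s) (hy : y ∈ s) :
    dphi φ x y ≤ H * ‖x - y‖ ^ 2 :=
  calc dphi φ x y ≤ dphi φ x y + dphi φ y x := le_add_of_nonneg_right (dphi_nonneg hconv hφ y x)
    _ = inner ℝ (gradient φ x - gradient φ y) (x - y) := dphi_add_dphi x y
    _ ≤ ‖gradient φ x - gradient φ y‖ * ‖x - y‖ := real_inner_le_norm _ _
    _ ≤ H * ‖x - y‖ * ‖x - y‖ := by gcongr; exact hgrad x hx y hy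
    _ = H * ‖x - y‖ ^ 2 := by ring

theorem lipschitzOnWith_dphi (hconv : ConvexOn ℝ univ φ) (hφ : Differentiable ℝ φ)
    (hH : 0 ≤ H) (hs : Bornology.IsBounded s)
    (hgrad : ∀ x ∈ s, ∀ y ∈ s, ‖gradient φ x - gradient φ y‖ ≤ H * ‖x - y‖)
    {x : EuclideanSpace ℝ (Fin p)} (hx : x ∈ s) :
    LipschitzOnWith (Real.toNNReal (2 * H * Metric.diam s)) (dphi φ x) s := by
  refine LipschitzOnWith.of_dist_le' fun θ hθ θ' hθ' => ?_
  have hdiam : ∀ y ∈ s, ∀ z ∈ s, ‖y - z‖ ≤ Metric.diam s := fun y hy z hz => by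
    rw [← dist_eq_norm]; exact Metric.dist_le_diam_of_mem hs hy hz
  have hinner : |inner ℝ (gradient φ θ' - gradient φ θ) (x - θ)| ≤ H * ‖θ - θ'‖ * ‖x - θ‖ :=
    calc _ ≤ ‖gradient φ θ' - gradient φ θ‖ * ‖x - θ‖ := abs_real_inner_le_norm _ _
      _ ≤ H * ‖θ - θ'‖ * ‖x - θ‖ := by
        gcongr; rw [norm_sub_rev θ]; exact hgrad θ' hθ' θ hθ
  rw [Real.dist_eq, dist_eq_norm, dphi_sub_dphi]
  calc _ ≤ |inner ℝ (gradient φ θ' - gradient φ θ) (x - θ)| + |dphi φ θ θ'| := abs_sub _ _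
    _ ≤ H * ‖θ - θ'‖ * ‖x - θ‖ + H * ‖θ - θ'‖ * ‖θ - θ'‖ := by
        rw [abs_of_nonneg (dphi_nonneg hconv hφ θ θ')]
        have := dphi_le_mul_norm_sq hconv hφ hgrad hθ hθ'
        nlinarith
    _ ≤ H * ‖θ - θ'‖ * Metric.diam s + H * ‖θ - θ'‖ * Metric.diam s := by
        gcongr
        exacts [hdiam x hx θ hθ, hdiam θ hθ θ' hθ']
    _ = 2 * H * Metric.diam s * ‖θ - θ'‖ := by ring

end Bregman

theorem lipschitzOnWith_of_abs_sub_le_mul_sum {ι : Type*} [Fintype ι] {Ψ : (ι → ℝ) → ℝ}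
    {s : Set (ι → ℝ)} {τ : ℝ} (hτ : 0 ≤ τ)
    (h : ∀ u ∈ s, ∀ v ∈ s, |Ψ u - Ψ v| ≤ τ * ∑ j, |u j - v j|) :
    LipschitzOnWith (Real.toNNReal (τ * Fintype.card ι)) Ψ s := by
  refine LipschitzOnWith.of_dist_le' fun u hu v hv => ?_
  calc dist (Ψ u) (Ψ v) ≤ τ * ∑ j, |u j - v j| := h u hu v hv
    _ ≤ τ * ∑ _j : ι, dist u v := by
        gcongr with j
        exact dist_le_pi_dist u v j
    _ = τ * Fintype.card ι * dist u v := by simp [mul_assoc]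

section fTheta

variable {p k : ℕ} {φ : EuclideanSpace ℝ (Fin p) → ℝ} {Ψ : (Fin k → ℝ) → ℝ}

theorem continuous_fTheta (hconv : ConvexOn ℝ univ φ) (hφ : Differentiable ℝ φ)
    (hΨ : ContinuousOn Ψ (Ici 0)) (Θ : Fin k → EuclideanSpace ℝ (Fin p)) :
    Continuous (fTheta φ Ψ Θ) :=
  hΨ.comp_continuous (continuous_pi fun j => continuous_dphi_left hφ.continuous (Θ j))
    fun x j => dphi_nonneg hconv hφ x (Θ j)

theorem lipschitzOnWith_fTheta (hconv : ConvexOn ℝ univ φ) (hφ : Differentiable ℝ φ)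
    {KΨ : NNReal} (hΨ : LipschitzOnWith KΨ Ψ (Ici 0))
    {s : Set (EuclideanSpace ℝ (Fin p))} {H : ℝ} (hH : 0 ≤ H) (hs : Bornology.IsBounded s)
    (hgrad : ∀ x ∈ s, ∀ y ∈ s, ‖gradient φ x - gradient φ y‖ ≤ H * ‖x - y‖)
    {x : EuclideanSpace ℝ (Fin p)} (hx : x ∈ s) :
    LipschitzOnWith (KΨ * Real.toNNReal (2 * H * Metric.diam s))
      (fun Θ => fTheta φ Ψ Θ x) (univ.pi fun _ => s) := by
  have hd := lipschitzOnWith_dphi hconv hφ hH hs hgrad hx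
  have hdivs : LipschitzOnWith (Real.toNNReal (2 * H * Metric.diam s))
      (fun Θ : Fin k → EuclideanSpace ℝ (Fin p) => fun j => dphi φ x (Θ j))
      (univ.pi fun _ => s) := by
    refine LipschitzOnWith.of_dist_le_mul fun Θ hΘ Θ' hΘ' => ?_
    refine (dist_pi_le_iff (by positivity)).2 fun j => ?_
    calc dist (dphi φ x (Θ j)) (dphi φ x (Θ' j))
        ≤ Real.toNNReal (2 * H * Metric.diam s) * dist (Θ j) (Θ' j) :=
          hd.dist_le_mul _ (hΘ j trivial) _ (hΘ' j trivial)
      _ ≤ Real.toNNReal (2 * H * Metric.diam s) * dist Θ Θ' := by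
          gcongr; exact dist_le_pi_dist Θ Θ' j
  exact hΨ.comp hdivs fun Θ _ j => dphi_nonneg hconv hφ x (Θ j)

end fTheta

theorem tendstoUniformlyOn_of_lipschitzOnWith_of_dense {ι α β : Type*} [PseudoMetricSpace α]
    [PseudoMetricSpace β] {l : Filter ι} {F : ι → α → β} {R : α → β} {K D : Set α} {L : NNReal}
    (hK : IsCompact K) (hDK : D ⊆ K) (hKD : K ⊆ closure D)
    (hF : ∀ n, LipschitzOnWith L (F n) K) (hR : LipschitzOnWith L R K)
    (hconv : ∀ θ ∈ D, Tendsto (F · θ) l (𝓝 (R θ))) :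
    TendstoUniformlyOn F R l K := by
  rw [Metric.tendstoUniformlyOn_iff]
  intro ε hε
  set r := ε / (3 * (L + 1))
  have hr : 0 < r := by positivity
  have hLr : L * r ≤ ε / 3 := by
    calc L * r ≤ (L + 1) * r := by gcongr; linarith
      _ = ε / 3 := by simp only [r]; field_simp
  obtain ⟨T, hTD, hTfin, hKT⟩ := hK.elim_finite_subcover_image (b := D)
    (c := fun d => Metric.ball d r) (fun _ _ => Metric.isOpen_ball) fun θ hθ => by
      obtain ⟨d, hd, hθd⟩ := Metric.mem_closure_iff.1 (hKD hθ) r hr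
      exact mem_biUnion hd (Metric.mem_ball.2 hθd)
  have hnet : ∀ᶠ n in l, ∀ d ∈ T, dist (R d) (F n d) < ε / 3 :=
    (eventually_all_finite hTfin).2 fun d hd =>
      (Metric.tendsto_nhds.1 (hconv d (hTD hd)) (ε / 3) (by positivity)).mono fun _ h => by
        rwa [dist_comm]
  filter_upwards [hnet] with n hn θ hθ
  obtain ⟨d, hd, hθd⟩ := mem_iUnion₂.1 (hKT hθ)
  have hdK := hDK (hTD hd)
  have hθd' : dist θ d ≤ r := (Metric.mem_ball.1 hθd).le
  have hRθ : dist (R θ) (R d) ≤ L * r := (hR.dist_le_mul θ hθ d hdK).trans (by gcongr)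
  have hFθ : dist (F n d) (F n θ) ≤ L * r := by
    rw [dist_comm]; exact (hF n |>.dist_le_mul θ hθ d hdK).trans (by gcongr)
  linarith [dist_triangle4 (R θ) (R d) (F n d) (F n θ), hn d hd]

theorem LipschitzOnWith.empiricalMean {α E : Type*} [PseudoMetricSpace α] {f : α → E → ℝ} {K : Set α} {L : NNReal} {x : ℕ → E}
    (hf : ∀ i, LipschitzOnWith L (f · (x i)) K) (n : ℕ) :
    LipschitzOnWith L (fun θ => (n : ℝ)⁻¹ * ∑ i ∈ Finset.range n, f θ (x i)) K := by
  refine LipschitzOnWith.of_dist_le_mul fun θ hθ θ' hθ' => ?_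
  rcases n.eq_zero_or_pos with rfl | hn
  · simp only [CharP.cast_eq_zero, inv_zero, zero_mul, dist_self]
    positivity
  rw [Real.dist_eq, ← mul_sub, ← Finset.sum_sub_distrib, abs_mul, abs_inv, Nat.abs_cast,
    inv_mul_le_iff₀ (by exact_mod_cast hn)]
  calc |∑ i ∈ Finset.range n, (f θ (x i) - f θ' (x i))|
      ≤ ∑ i ∈ Finset.range n, |f θ (x i) - f θ' (x i)| := Finset.abs_sum_le_sum_abs _ _
    _ ≤ ∑ _i ∈ Finset.range n, L * dist θ θ' :=
        Finset.sum_le_sum fun i _ => (hf i).dist_le_mul θ hθ θ' hθ'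
    _ = n * (L * dist θ θ') := by simp

section EmpiricalMeans

variable {Ω E α : Type*} [MeasurableSpace Ω] {μ : Measure Ω} [MeasurableSpace E] {P : Measure E}
  {X : ℕ → Ω → E} [PseudoMetricSpace α]

theorem ae_tendsto_empiricalMean (hXmeas : ∀ i, Measurable (X i))
    (hXlaw : ∀ i, μ.map (X i) = P) (hXindep : iIndepFun X μ) {g : E → ℝ} (hg : Measurable g)
    (hint : Integrable g P) :
    ∀ᵐ ω ∂μ, Tendsto (fun n : ℕ => (n : ℝ)⁻¹ * ∑ i ∈ Finset.range n, g (X i ω)) atTop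
      (𝓝 (∫ x, g x ∂P)) := by
  have hident : ∀ i, IdentDistrib (g ∘ X i) (g ∘ X 0) μ μ := fun i =>
    IdentDistrib.comp ⟨(hXmeas i).aemeasurable, (hXmeas 0).aemeasurable, by rw [hXlaw, hXlaw]⟩ hg
  have hint0 : Integrable (g ∘ X 0) μ :=
    (integrable_map_measure hg.aestronglyMeasurable (hXmeas 0).aemeasurable).1 (hXlaw 0 ▸ hint)
  have hmean : ∫ ω, g (X 0 ω) ∂μ = ∫ x, g x ∂P := by
    rw [← hXlaw 0, integral_map (hXmeas 0).aemeasurable hg.aestronglyMeasurable]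
  simpa [hmean] using
    strong_law_ae _ hint0 (fun i j hij => (hXindep.indepFun hij).comp hg hg) hident

theorem LipschitzOnWith.integral [IsProbabilityMeasure P] {f : α → E → ℝ} {K : Set α}
    {L : NNReal} (hint : ∀ θ ∈ K, Integrable (f θ) P)
    (hf : ∀ᵐ x ∂P, LipschitzOnWith L (f · x) K) :
    LipschitzOnWith L (fun θ => ∫ x, f θ x ∂P) K := by
  refine LipschitzOnWith.of_dist_le_mul fun θ hθ θ' hθ' => ?_
  rw [dist_eq_norm, ← integral_sub (hint θ hθ) (hint θ' hθ')]
  have hbound : ∀ᵐ x ∂P, ‖f θ x - f θ' x‖ ≤ L * dist θ θ' :=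
    hf.mono fun x hx => by simpa [← dist_eq_norm] using hx.dist_le_mul θ hθ θ' hθ'
  simpa using norm_integral_le_of_norm_le_const hbound

theorem ae_tendstoUniformlyOn_empiricalMean [IsProbabilityMeasure P]
    (hXmeas : ∀ i, Measurable (X i)) (hXlaw : ∀ i, μ.map (X i) = P) (hXindep : iIndepFun X μ)
    {f : α → E → ℝ} {K : Set α} (hK : IsCompact K) (hmeas : ∀ θ ∈ K, Measurable (f θ))
    (hint : ∀ θ ∈ K, Integrable (f θ) P) {L : NNReal}
    (hf : ∀ᵐ x ∂P, LipschitzOnWith L (f · x) K) :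
    ∀ᵐ ω ∂μ, TendstoUniformlyOn (fun (n : ℕ) θ => (n : ℝ)⁻¹ * ∑ i ∈ Finset.range n, f θ (X i ω))
      (fun θ => ∫ x, f θ x ∂P) atTop K := by
  obtain ⟨D, hDK, hDcount, hKD⟩ := hK.isSeparable.exists_countable_dense_subset
  have hSLLN : ∀ᵐ ω ∂μ, ∀ θ ∈ D, Tendsto (fun n : ℕ => (n : ℝ)⁻¹ *
      ∑ i ∈ Finset.range n, f θ (X i ω)) atTop (𝓝 (∫ x, f θ x ∂P)) :=
    (ae_ball_iff hDcount).2 fun θ hθ =>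
      ae_tendsto_empiricalMean hXmeas hXlaw hXindep (hmeas θ (hDK hθ)) (hint θ (hDK hθ))
  have hsample : ∀ᵐ ω ∂μ, ∀ i, LipschitzOnWith L (f · (X i ω)) K :=
    ae_all_iff.2 fun i => ae_of_ae_map (hXmeas i).aemeasurable ((hXlaw i).symm ▸ hf)
  filter_upwards [hSLLN, hsample] with ω hω hωL
  exact tendstoUniformlyOn_of_lipschitzOnWith_of_dense hK hDK hKD
    (LipschitzOnWith.empiricalMean hωL) (LipschitzOnWith.integral hint hf) hω

end EmpiricalMeans

theorem tendsto_of_tendstoUniformlyOn_of_isMinOn {ι α : Type*} {l : Filter ι}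
    {F : ι → α → ℝ} {R : α → ℝ} {K : Set α} (hunif : TendstoUniformlyOn F R l K)
    {θhat : ι → α} {θstar : α} (hθhat : ∀ᶠ n in l, θhat n ∈ K ∧ IsMinOn (F n) K (θhat n))
    (hθstar : θstar ∈ K) (hR : IsMinOn R K θstar) :
    Tendsto (fun n => R (θhat n)) l (𝓝 (R θstar)) := by
  rw [Metric.tendstoUniformlyOn_iff] at hunif
  refine Metric.tendsto_nhds.2 fun ε hε => ?_
  filter_upwards [hθhat, hunif (ε / 2) (by positivity)] with n ⟨hK, hmin⟩ hclose
  have h1 := hclose _ hK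
  have h2 := hclose _ hθstar
  have h3 : F n (θhat n) ≤ F n θstar := hmin hθstar
  have h4 : R θstar ≤ R (θhat n) := hR hK
  rw [Real.dist_eq] at h1 h2 ⊢
  rw [abs_lt] at h1 h2 ⊢
  constructor <;> linarith

theorem tendsto_zero_of_wellSeparated {ι α : Type*} {l : Filter ι} {R d : α → ℝ} {K : Set α}
    {θstar : α} (hd : ∀ θ, 0 ≤ d θ) (hsep : ∀ η > 0, ∃ ε > 0, ∀ θ ∈ K, η < d θ → R θstar + ε < R θ)
    {θ : ι → α} (hθ : ∀ᶠ n in l, θ n ∈ K) (hR : Tendsto (fun n => R (θ n)) l (𝓝 (R θstar))) :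
    Tendsto (fun n => d (θ n)) l (𝓝 0) := by
  refine tendsto_order.2 ⟨fun a ha => Eventually.of_forall fun n => ha.trans_le (hd _),
    fun a ha => ?_⟩
  obtain ⟨ε, hε, hsepε⟩ := hsep (a / 2) (by positivity)
  filter_upwards [hθ, (tendsto_order.1 hR).2 _ (lt_add_of_pos_right _ hε)] with n hK hRn
  by_contra! h
  linarith [hsepε _ hK (by linarith)]

theorem strong_consistency_general
    {p k : ℕ} {M : ℝ}
    (φ : EuclideanSpace ℝ (Fin p) → ℝ)
    (hφconv : ConvexOn ℝ Set.univ φ) (hφdiff : Differentiable ℝ φ)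
    {H : ℝ} (hH : 0 ≤ H)
    (hgradlip : ∀ x ∈ cube p M, ∀ y ∈ cube p M,
      ‖gradient φ x - gradient φ y‖ ≤ H * ‖x - y‖)
    (Ψ : (Fin k → ℝ) → ℝ)
    {τ : ℝ} (hτ : 0 < τ)
    (hΨlip : ∀ u v : Fin k → ℝ, (∀ j, 0 ≤ u j) → (∀ j, 0 ≤ v j) →
      |Ψ u - Ψ v| ≤ τ * ∑ j, |u j - v j|)
    {Ω : Type} [MeasureSpace Ω]
    (P : Measure (EuclideanSpace ℝ (Fin p))) [IsProbabilityMeasure P]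
    (hP : P (cube p M) = 1)
    (X : ℕ → Ω → EuclideanSpace ℝ (Fin p))
    (hXmeas : ∀ i, Measurable (X i))
    (hXlaw : ∀ i, Measure.map (X i) ℙ = P)
    (hXindep : iIndepFun X ℙ)
    (Θstar : Fin k → EuclideanSpace ℝ (Fin p))
    (hΘstarC : ∀ j, Θstar j ∈ cube p M)
    (hΘstar : ∀ Θ : Fin k → EuclideanSpace ℝ (Fin p),
      ∫ x, fTheta φ Ψ Θstar x ∂P ≤ ∫ x, fTheta φ Ψ Θ x ∂P)
    (Θhat : ℕ → Ω → Fin k → EuclideanSpace ℝ (Fin p))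
    (hΘhat : ∀ᵐ ω ∂(ℙ : Measure Ω), ∀ n : ℕ, 0 < n →
      (∀ j, Θhat n ω j ∈ cube p M) ∧
      ∀ Θ : Fin k → EuclideanSpace ℝ (Fin p), (∀ j, Θ j ∈ cube p M) →
        (n : ℝ)⁻¹ * ∑ i ∈ Finset.range n, fTheta φ Ψ (Θhat n ω) (X i ω) ≤
          (n : ℝ)⁻¹ * ∑ i ∈ Finset.range n, fTheta φ Ψ Θ (X i ω))
    (hident : ∀ η : ℝ, 0 < η → ∃ ε : ℝ, 0 < ε ∧
      ∀ Θ : Fin k → EuclideanSpace ℝ (Fin p), (∀ j, Θ j ∈ cube p M) →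
        η < diss Θ Θstar →
        ∫ x, fTheta φ Ψ Θstar x ∂P + ε < ∫ x, fTheta φ Ψ Θ x ∂P) :
    ∀ᵐ ω ∂(ℙ : Measure Ω),
      Tendsto (fun n => ∫ x, fTheta φ Ψ (Θhat n ω) x ∂P) atTop
        (nhds (∫ x, fTheta φ Ψ Θstar x ∂P)) ∧
      Tendsto (fun n => diss (Θhat n ω) Θstar) atTop (nhds 0) := by
  have hcube : ∀ᵐ x ∂P, x ∈ cube p M :=
    (ae_iff_measure_eq (isCompact_cube p M).measurableSet.nullMeasurableSet).2 (hP.trans measure_univ.symm)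
  have hΨ : LipschitzOnWith _ Ψ (Ici 0) :=
    lipschitzOnWith_of_abs_sub_le_mul_sum hτ.le fun u hu v hv => hΨlip u v hu hv
  have hcont := continuous_fTheta (k := k) hφconv hφdiff hΨ.continuousOn
  have hint (Θ : Fin k → EuclideanSpace ℝ (Fin p)) : Integrable (fTheta φ Ψ Θ) P := by
    rw [← Measure.restrict_eq_self_of_ae_mem hcube]
    exact (hcont Θ).continuousOn.integrableOn_compact (isCompact_cube p M)
  have hunif := ae_tendstoUniformlyOn_empiricalMean hXmeas hXlaw hXindep
    (isCompact_univ_pi fun _ => isCompact_cube p M) (fun Θ _ => (hcont Θ).measurable)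
    (fun Θ _ => hint Θ) (hcube.mono fun x hx => lipschitzOnWith_fTheta hφconv hφdiff hΨ hH
      (isCompact_cube p M).isBounded hgradlip hx)
  filter_upwards [hunif, hΘhat] with ω hω hmin
  have hERM : ∀ᶠ n in atTop, Θhat n ω ∈ univ.pi (fun _ => cube p M) ∧
      IsMinOn (fun Θ => (n : ℝ)⁻¹ * ∑ i ∈ Finset.range n, fTheta φ Ψ Θ (X i ω))
        (univ.pi fun _ => cube p M) (Θhat n ω) :=
    eventually_atTop.2 ⟨1, fun n hn => ⟨mem_univ_pi.2 (hmin n hn).1,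
      fun Θ hΘ => (hmin n hn).2 Θ (mem_univ_pi.1 hΘ)⟩⟩
  have hrisk := tendsto_of_tendstoUniformlyOn_of_isMinOn hω hERM (mem_univ_pi.2 hΘstarC)
    fun Θ _ => hΘstar Θ
  refine ⟨hrisk, tendsto_zero_of_wellSeparated (R := fun Θ => ∫ x, fTheta φ Ψ Θ x ∂P) (diss_nonneg · Θstar) (fun η hη => ?_)
    (hERM.mono fun _ h => h.1) hrisk⟩
  obtain ⟨ε, hε, hsep⟩ := hident η hη
  exact ⟨ε, hε, fun Θ hΘ => hsep Θ (mem_univ_pi.1 hΘ)⟩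

/-- Strong consistency: under the identifiability condition, the empirical risk
minimizers satisfy `P f_Θ̂ₙ → P f_Θ*` and `diss(Θ̂ₙ, Θ*) → 0` almost surely. -/
theorem strong_consistency
    {p k : ℕ} (hp : 0 < p) (hk : 0 < k) {M : ℝ} (hM : 0 < M)
    (φ : EuclideanSpace ℝ (Fin p) → ℝ)
    (hφconv : ConvexOn ℝ Set.univ φ) (hφdiff : Differentiable ℝ φ)
    (hφzero : φ 0 = 0) (hgradzero : gradient φ 0 = 0)
    {H : ℝ} (hH : 0 ≤ H)
    (hgradlip : ∀ x ∈ cube p M, ∀ y ∈ cube p M,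
      ‖gradient φ x - gradient φ y‖ ≤ H * ‖x - y‖)
    (Ψ : (Fin k → ℝ) → ℝ)
    (hΨnonneg : ∀ u : Fin k → ℝ, (∀ j, 0 ≤ u j) → 0 ≤ Ψ u)
    (hΨmono : ∀ u v : Fin k → ℝ, (∀ j, 0 ≤ u j) → (∀ j, u j ≤ v j) → Ψ u ≤ Ψ v)
    (hΨzero : Ψ 0 = 0)
    {τ : ℝ} (hτ : 0 < τ)
    (hΨlip : ∀ u v : Fin k → ℝ, (∀ j, 0 ≤ u j) → (∀ j, 0 ≤ v j) →
      |Ψ u - Ψ v| ≤ τ * ∑ j, |u j - v j|)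
    {Ω : Type} [MeasureSpace Ω] [IsProbabilityMeasure (ℙ : Measure Ω)]
    (P : Measure (EuclideanSpace ℝ (Fin p))) [IsProbabilityMeasure P]
    (hP : P (cube p M) = 1)
    (X : ℕ → Ω → EuclideanSpace ℝ (Fin p))
    (hXmeas : ∀ i, Measurable (X i))
    (hXlaw : ∀ i, Measure.map (X i) ℙ = P)
    (hXindep : iIndepFun X ℙ)
    (Θstar : Fin k → EuclideanSpace ℝ (Fin p))
    (hΘstarC : ∀ j, Θstar j ∈ cube p M)
    (hΘstar : ∀ Θ : Fin k → EuclideanSpace ℝ (Fin p),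
      ∫ x, fTheta φ Ψ Θstar x ∂P ≤ ∫ x, fTheta φ Ψ Θ x ∂P)
    (Θhat : ℕ → Ω → Fin k → EuclideanSpace ℝ (Fin p))
    (hΘhatmeas : ∀ n, Measurable (Θhat n))
    (hΘhat : ∀ᵐ ω ∂(ℙ : Measure Ω), ∀ n : ℕ, 0 < n →
      (∀ j, Θhat n ω j ∈ cube p M) ∧
      ∀ Θ : Fin k → EuclideanSpace ℝ (Fin p), (∀ j, Θ j ∈ cube p M) →
        (n : ℝ)⁻¹ * ∑ i ∈ Finset.range n, fTheta φ Ψ (Θhat n ω) (X i ω) ≤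
          (n : ℝ)⁻¹ * ∑ i ∈ Finset.range n, fTheta φ Ψ Θ (X i ω))
    (hident : ∀ η : ℝ, 0 < η → ∃ ε : ℝ, 0 < ε ∧
      ∀ Θ : Fin k → EuclideanSpace ℝ (Fin p), (∀ j, Θ j ∈ cube p M) →
        η < diss Θ Θstar →
        ∫ x, fTheta φ Ψ Θstar x ∂P + ε < ∫ x, fTheta φ Ψ Θ x ∂P) :
    ∀ᵐ ω ∂(ℙ : Measure Ω),
      Tendsto (fun n => ∫ x, fTheta φ Ψ (Θhat n ω) x ∂P) atTop
        (nhds (∫ x, fTheta φ Ψ Θstar x ∂P)) ∧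
      Tendsto (fun n => diss (Θhat n ω) Θstar) atTop (nhds 0) :=
  strong_consistency_general φ hφconv hφdiff hH hgradlip Ψ hτ hΨlip P hP X hXmeas hXlaw hXindep
    Θstar hΘstarC hΘstar Θhat hΘhat hident
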